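/- arXiv:2504.03952 — 3 statements merged into one kernel-verified Lean document; each statement's English description precedes it below -/
import Mathlib

section
/- Let φ be a unit eigenvector of H = ∫₀^{1-γ} μ_α μ_α^⊤ dα with eigenvalue σ, and suppose γ ≤ 2/3. Then for every α ∈ [0, 1-γ], |μ_α^⊤ φ| ≤ √(2/γ)·σ^{1/4}. -/
/-!
With `g α = (μ_αᵀ φ)²`, the Rayleigh quotient gives `σ = φᵀ H φ = ∫₀^{1-γ} g`. By Cauchy–Schwarz
`g ≤ 1/γ` and `g` is `(2/γ²)`-Lipschitz on `[0, 1-γ]`; the Lipschitz constant uses `(2-γ)³ ≥ 2`,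
which holds for `γ ≤ 2/3`. A nonnegative `K`-Lipschitz function lies above the tent
`g α - K |t - α|` on a window of length `g α / K` around `α`, and this window fits into `[0, 1-γ]`
since `g α / K ≤ γ/2 ≤ 1-γ`. Integrating the tent gives
`σ ≥ g(α)² / (2K) = γ² g(α)² / 4`, which is the claim raised to the fourth power.
-/

open MeasureTheory Set intervalIntegral
open scoped Matrix

theorem integral_sub_mul_abs_sub (M K c x d : ℝ) (hcx : c ≤ x) (hxd : x ≤ d) :
    ∫ t in c..d, (M - K * |t - x|) = M * (d - c) - K * ((x - c) ^ 2 + (d - x) ^ 2) / 2 := by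
  have hint : ∀ u v, IntervalIntegrable (fun t => M - K * |t - x|) volume u v :=
    fun u v => (by fun_prop : Continuous fun t => M - K * |t - x|).intervalIntegrable u v
  have left : ∫ t in c..x, (M - K * |t - x|) = ∫ t in c..x, (M - K * x + K * t) :=
    integral_congr fun t ht => by
      rw [uIcc_of_le hcx] at ht
      simp only [abs_of_nonpos (sub_nonpos.2 ht.2)]
      ring
  have right : ∫ t in x..d, (M - K * |t - x|) = ∫ t in x..d, (M + K * x - K * t) :=
    integral_congr fun t ht => by
      rw [uIcc_of_le hxd] at ht
      simp only [abs_of_nonneg (sub_nonneg.2 ht.1)]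
      ring
  rw [← integral_add_adjacent_intervals (hint c x) (hint x d), left, right,
    intervalIntegral.integral_add intervalIntegrable_const (intervalIntegrable_id.const_mul K),
    intervalIntegral.integral_sub intervalIntegrable_const (intervalIntegrable_id.const_mul K)]
  simp only [intervalIntegral.integral_const, smul_eq_mul]
  rw [intervalIntegral.integral_const_mul, intervalIntegral.integral_const_mul, integral_id,
    integral_id]
  ring

theorem sq_le_two_mul_integral_of_lipschitzOnWith {g : ℝ → ℝ} {K : NNReal} {a b x : ℝ}
    (hg : LipschitzOnWith K g (Icc a b)) (hg0 : ∀ t ∈ Icc a b, 0 ≤ g t) (hx : x ∈ Icc a b)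
    (hlen : g x ≤ K * (b - a)) : g x ^ 2 ≤ 2 * K * ∫ t in a..b, g t := by
  obtain hK | hK := K.coe_nonneg.eq_or_lt
  · rw [← hK] at hlen ⊢
    simp [le_antisymm (by simpa using hlen) (hg0 x hx)]
  set w := g x / K
  set c := min x (b - w)
  have hw0 : 0 ≤ w := div_nonneg (hg0 x hx) hK.le
  have hwK : K * w = g x := mul_div_cancel₀ _ hK.ne'
  have hw : w ≤ b - a := by rwa [div_le_iff₀' hK]
  have hac : a ≤ c := le_min hx.1 (by linarith)
  have hcx : c ≤ x := min_le_left _ _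
  have hxw : x - w ≤ c := le_min (by linarith) (by linarith [hx.2])
  have hcb : c + w ≤ b := by linarith [min_le_right x (b - w)]
  have hgi : IntervalIntegrable g volume a b :=
    hg.continuousOn.intervalIntegrable_of_Icc (hac.trans (hcx.trans hx.2))
  have tent : ∀ t ∈ Icc a b, g x - K * |t - x| ≤ g t := fun t ht => by
    have := hg.dist_le_mul t ht x hx
    rw [Real.dist_eq, Real.dist_eq] at this
    linarith [neg_abs_le (g t - g x)]
  have hsq : (x - c) ^ 2 + (c + w - x) ^ 2 ≤ w ^ 2 := by nlinarith
  calc g x ^ 2 = 2 * K * (g x * w - K * w ^ 2 / 2) := by rw [← hwK]; ring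
    _ ≤ 2 * K * (g x * w - K * ((x - c) ^ 2 + (c + w - x) ^ 2) / 2) := by gcongr
    _ = 2 * K * ∫ t in c..c + w, (g x - K * |t - x|) := by
      rw [integral_sub_mul_abs_sub _ _ _ _ _ hcx (by linarith)]; ring
    _ ≤ 2 * K * ∫ t in c..c + w, g t := by
      gcongr
      have hsub : uIcc c (c + w) ⊆ uIcc a b := by
        rw [uIcc_of_le (by linarith), uIcc_of_le (by linarith)]
        exact Icc_subset_Icc hac hcb
      exact integral_mono_on (by linarith) (Continuous.intervalIntegrable (by fun_prop) _ _)
        (hgi.mono_set hsub) fun t ht => tent t ⟨hac.trans ht.1, ht.2.trans hcb⟩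
    _ ≤ 2 * K * ∫ t in a..b, g t := by
      gcongr
      exact integral_mono_interval hac (by linarith) hcb
        (ae_restrict_of_forall_mem measurableSet_Ioc fun t ht => hg0 t (Ioc_subset_Icc_self ht)) hgi

theorem sq_sum_mul_le_sum_sq_of_sum_sq_eq_one {ι : Type*} [Fintype ι] {φ : ι → ℝ}
    (hφ : ∑ i, φ i ^ 2 = 1) (v : ι → ℝ) : (∑ i, v i * φ i) ^ 2 ≤ ∑ i, v i ^ 2 := by
  simpa [hφ] using Finset.sum_mul_sq_le_sq_mul_sq Finset.univ v φ

theorem sum_range_sq_mul_pow_pred_le {y : ℝ} (hy0 : 0 ≤ y) (hy1 : y < 1) (n : ℕ) :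
    ∑ i ∈ Finset.range n, (i : ℝ) ^ 2 * y ^ (i - 1) ≤ 2 / (1 - y) ^ 3 := by
  have hS : HasSum (fun k : ℕ => ((k + 2).choose 2 : ℝ) * y ^ k) (1 / (1 - y) ^ 3) := by
    simpa using hasSum_choose_mul_geometric_of_norm_lt_one 2
      (by rwa [Real.norm_of_nonneg hy0] : ‖y‖ < 1)
  cases n with
  | zero => simp only [Finset.range_zero, Finset.sum_empty]; positivity
  | succ n =>
    rw [Finset.sum_range_succ', Nat.cast_zero, zero_pow two_ne_zero, zero_mul, add_zero,
      div_eq_mul_one_div]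
    calc ∑ k ∈ Finset.range n, ((k + 1 : ℕ) : ℝ) ^ 2 * y ^ (k + 1 - 1)
        ≤ ∑ k ∈ Finset.range n, 2 * (((k + 2).choose 2 : ℝ) * y ^ k) := by
          refine Finset.sum_le_sum fun k _ => ?_
          rw [Nat.cast_choose_two, Nat.add_sub_cancel]
          push_cast
          nlinarith [pow_nonneg hy0 k, mul_nonneg k.cast_nonneg (pow_nonneg hy0 k)]
      _ ≤ 2 * (1 / (1 - y) ^ 3) := by
          rw [← Finset.mul_sum]
          gcongr
          exact hS.summable.sum_le_tsum _ (fun k _ => by positivity) |>.trans_eq hS.tsum_eq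

def polyEval {m : ℕ} (φ : Fin m → ℝ) (t : ℝ) : ℝ := ∑ i : Fin m, t ^ (i : ℕ) * φ i

section polyEval

variable {m : ℕ} {φ : Fin m → ℝ}

theorem sq_polyEval_le_inv_one_sub (hφ : ∑ i, φ i ^ 2 = 1) {t : ℝ} (ht0 : 0 ≤ t) (ht1 : t < 1) :
    polyEval φ t ^ 2 ≤ (1 - t)⁻¹ :=
  calc polyEval φ t ^ 2 ≤ ∑ i : Fin m, (t ^ (i : ℕ)) ^ 2 :=
        sq_sum_mul_le_sum_sq_of_sum_sq_eq_one hφ _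
    _ ≤ ∑ i : Fin m, t ^ (i : ℕ) := Finset.sum_le_sum fun i _ =>
        pow_le_of_le_one (pow_nonneg ht0 _) (pow_le_one₀ ht0 ht1.le) two_ne_zero
    _ = ∑ i ∈ Finset.Ico 0 m, t ^ i := by rw [Fin.sum_univ_eq_sum_range, Finset.range_eq_Ico]
    _ ≤ (1 - t)⁻¹ := by
        simpa [div_eq_mul_inv] using geom_sum_Ico_le_of_lt_one (m := 0) (n := m) ht0 ht1

theorem sq_polyEval_sub_le (hφ : ∑ i, φ i ^ 2 = 1) {x t s : ℝ} (hx : x < 1) (ht : t ∈ Icc 0 x)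
    (hs : s ∈ Icc 0 x) : (polyEval φ t - polyEval φ s) ^ 2 ≤ 2 / (1 - x ^ 2) ^ 3 * (t - s) ^ 2 := by
  have hx0 : 0 ≤ x := ht.1.trans ht.2
  have hpow : ∀ i : ℕ, (t ^ i - s ^ i) ^ 2 ≤ (i : ℝ) ^ 2 * (x ^ 2) ^ (i - 1) * (t - s) ^ 2 := by
    intro i
    have hmax : max |t| |s| ≤ x := by
      rw [abs_of_nonneg ht.1, abs_of_nonneg hs.1]; exact max_le ht.2 hs.2
    calc (t ^ i - s ^ i) ^ 2 = |t ^ i - s ^ i| ^ 2 := (sq_abs _).symm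
      _ ≤ (|t - s| * i * x ^ (i - 1)) ^ 2 := by
          gcongr
          exact (abs_pow_sub_pow_le t s i).trans (by gcongr)
      _ = (i : ℝ) ^ 2 * (x ^ 2) ^ (i - 1) * (t - s) ^ 2 := by
          rw [mul_pow, mul_pow, sq_abs, ← pow_mul, ← pow_mul]; ring
  calc (polyEval φ t - polyEval φ s) ^ 2
      = (∑ i : Fin m, (t ^ (i : ℕ) - s ^ (i : ℕ)) * φ i) ^ 2 := by
        simp only [polyEval, sub_mul, Finset.sum_sub_distrib]
    _ ≤ ∑ i : Fin m, (t ^ (i : ℕ) - s ^ (i : ℕ)) ^ 2 :=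
        sq_sum_mul_le_sum_sq_of_sum_sq_eq_one hφ _
    _ ≤ ∑ i : Fin m, ((i : ℕ) : ℝ) ^ 2 * (x ^ 2) ^ ((i : ℕ) - 1) * (t - s) ^ 2 :=
        Finset.sum_le_sum fun i _ => hpow i
    _ = (∑ i ∈ Finset.range m, (i : ℝ) ^ 2 * (x ^ 2) ^ (i - 1)) * (t - s) ^ 2 := by
        rw [← Finset.sum_mul, Fin.sum_univ_eq_sum_range (fun i => (i : ℝ) ^ 2 * (x ^ 2) ^ (i - 1))]
    _ ≤ 2 / (1 - x ^ 2) ^ 3 * (t - s) ^ 2 := by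
        gcongr
        exact sum_range_sq_mul_pow_pred_le (sq_nonneg x) (by nlinarith) m

variable {γ : ℝ}

theorem sq_polyEval_le_inv (hφ : ∑ i, φ i ^ 2 = 1) (hγ0 : 0 < γ) {t : ℝ}
    (ht : t ∈ Icc 0 (1 - γ)) : polyEval φ t ^ 2 ≤ γ⁻¹ :=
  (sq_polyEval_le_inv_one_sub hφ ht.1 (by linarith [ht.2])).trans
    (inv_anti₀ hγ0 (by linarith [ht.2]))

theorem sq_polyEval_sub_le_div_pow_three (hφ : ∑ i, φ i ^ 2 = 1) (hγ0 : 0 < γ) (hγ : γ ≤ 2 / 3)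
    {t s : ℝ} (ht : t ∈ Icc 0 (1 - γ)) (hs : s ∈ Icc 0 (1 - γ)) :
    (polyEval φ t - polyEval φ s) ^ 2 ≤ (t - s) ^ 2 / γ ^ 3 := by
  refine (sq_polyEval_sub_le hφ (by linarith) ht hs).trans ?_
  have hcube : 2 ≤ (2 - γ) ^ 3 := by nlinarith [sq_nonneg (2 - γ)]
  rw [show 1 - (1 - γ) ^ 2 = γ * (2 - γ) by ring, div_mul_eq_mul_div,
    div_le_div_iff₀ (pow_pos (mul_pos hγ0 (by linarith)) 3) (by positivity), mul_pow]
  nlinarith [mul_nonneg (mul_nonneg (sq_nonneg (t - s)) (pow_pos hγ0 3).le) (sub_nonneg.2 hcube)]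

theorem lipschitzOnWith_sq_polyEval (hφ : ∑ i, φ i ^ 2 = 1) (hγ0 : 0 < γ) (hγ : γ ≤ 2 / 3) :
    LipschitzOnWith (2 / γ ^ 2).toNNReal (fun t => polyEval φ t ^ 2) (Icc 0 (1 - γ)) := by
  refine LipschitzOnWith.of_dist_le_mul fun t ht s hs => ?_
  rw [Real.dist_eq, Real.dist_eq, Real.coe_toNNReal _ (by positivity)]
  refine abs_le_of_sq_le_sq ?_ (by positivity)
  calc (polyEval φ t ^ 2 - polyEval φ s ^ 2) ^ 2
      = (polyEval φ t - polyEval φ s) ^ 2 * (polyEval φ t + polyEval φ s) ^ 2 := by ring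
    _ ≤ (t - s) ^ 2 / γ ^ 3 * (4 * γ⁻¹) := by
      gcongr
      · exact sq_polyEval_sub_le_div_pow_three hφ hγ0 hγ ht hs
      · nlinarith [sq_polyEval_le_inv hφ hγ0 ht, sq_polyEval_le_inv hφ hγ0 hs,
          sq_nonneg (polyEval φ t - polyEval φ s)]
    _ = (2 / γ ^ 2 * |t - s|) ^ 2 := by
      rw [mul_pow, sq_abs]
      field_simp
      ring

end polyEval

theorem eigenvalue_eq_integral_sq {ι : Type*} [Fintype ι] {f : ℝ → ι → ℝ} {a b : ℝ}
    (hf : ∀ i j, IntervalIntegrable (fun t => f t i * f t j) volume a b)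
    {H : Matrix ι ι ℝ} (hH : ∀ i j, H i j = ∫ t in a..b, f t i * f t j)
    {φ : ι → ℝ} {σ : ℝ} (heig : H *ᵥ φ = σ • φ) (hφ : ∑ i, φ i ^ 2 = 1) :
    σ = ∫ t in a..b, (∑ i, f t i * φ i) ^ 2 := by
  have hij : ∀ i j, IntervalIntegrable (fun t => φ i * φ j * (f t i * f t j)) volume a b :=
    fun i j => (hf i j).const_mul _
  calc σ
    _ = φ ⬝ᵥ (H *ᵥ φ) := by
      rw [heig, dotProduct_smul, smul_eq_mul, dotProduct]
      simp only [← sq, hφ, mul_one]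
    _ = ∑ i, ∑ j, ∫ t in a..b, φ i * φ j * (f t i * f t j) := by
      simp only [dotProduct, Matrix.mulVec, hH, Finset.mul_sum, intervalIntegral.integral_const_mul]
      exact Finset.sum_congr rfl fun i _ => Finset.sum_congr rfl fun j _ => by ring
    _ = ∫ t in a..b, ∑ i, ∑ j, φ i * φ j * (f t i * f t j) := by
      rw [integral_finsetSum fun i _ => by
        simpa only [Finset.sum_fn] using IntervalIntegrable.sum _ fun j _ => hij i j]
      exact Finset.sum_congr rfl fun i _ => (integral_finsetSum fun j _ => hij i j).symm
    _ = ∫ t in a..b, (∑ i, f t i * φ i) ^ 2 := by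
      congr 1 with t
      rw [sq, Finset.sum_mul_sum]
      exact Finset.sum_congr rfl fun i _ => Finset.sum_congr rfl fun j _ => by ring

theorem abs_le_sqrt_mul_rpow_of_sq_sq_le {y c σ : ℝ} (hc : 0 ≤ c) (hσ : 0 ≤ σ)
    (h : (y ^ 2) ^ 2 ≤ c ^ 2 * σ) : |y| ≤ Real.sqrt c * σ ^ ((1:ℝ) / 4) := by
  have hsqrt : Real.sqrt c ^ 4 = c ^ 2 := by
    rw [show 4 = 2 * 2 from rfl, pow_mul, Real.sq_sqrt hc]
  have hquarter : (σ ^ ((1:ℝ) / 4)) ^ 4 = σ := by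
    rw [← Real.rpow_natCast, ← Real.rpow_mul hσ]
    norm_num
  rw [← pow_le_pow_iff_left₀ (abs_nonneg _) (by positivity) four_ne_zero, mul_pow, hsqrt,
    hquarter]
  calc |y| ^ 4 = (y ^ 2) ^ 2 := by rw [← sq_abs y]; ring
    _ ≤ c ^ 2 * σ := h

/-- Let `φ` be a unit eigenvector of `H = ∫₀^{1-γ} μ_α μ_α^⊤ dα` with eigenvalue
`σ ≥ 0`, and suppose `γ ≤ 2/3`. Then for every `α ∈ [0, 1-γ]`,
`|μ_α^⊤ φ| ≤ √(2/γ)·σ^{1/4}`. -/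
theorem proj_le_sqrt_eigenvalue (γ : ℝ) (hγ0 : 0 < γ) (hγ23 : γ ≤ 2 / 3) (m : ℕ)
    (μ : ℝ → Fin m → ℝ) (hμ : ∀ α i, μ α i = α ^ (i : ℕ))
    (H : Matrix (Fin m) (Fin m) ℝ)
    (hH : ∀ i j, H i j = ∫ α in (0:ℝ)..(1 - γ), μ α i * μ α j)
    (φ : Fin m → ℝ) (σ : ℝ) (hσ : 0 ≤ σ)
    (heig : H.mulVec φ = σ • φ) (hunit : ∑ i, φ i ^ 2 = 1) :
    ∀ α ∈ Set.Icc (0:ℝ) (1 - γ),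
      |∑ i, μ α i * φ i| ≤ Real.sqrt (2 / γ) * σ ^ ((1:ℝ) / 4) := by
  intro α hα
  obtain rfl : μ = fun α (i : Fin m) => α ^ (i : ℕ) := funext fun α => funext fun i => hμ α i
  have hσ_eq : σ = ∫ t in (0:ℝ)..(1 - γ), polyEval φ t ^ 2 :=
    eigenvalue_eq_integral_sq (fun i j => Continuous.intervalIntegrable (by fun_prop) _ _) hH heig
      hunit
  have hlen : polyEval φ α ^ 2 ≤ (2 / γ ^ 2).toNNReal * (1 - γ - 0) := by
    rw [Real.coe_toNNReal _ (by positivity)]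
    refine (sq_polyEval_le_inv hunit hγ0 hα).trans ?_
    rw [inv_eq_one_div, div_mul_eq_mul_div, div_le_div_iff₀ hγ0 (by positivity)]
    nlinarith
  have key := sq_le_two_mul_integral_of_lipschitzOnWith
    (lipschitzOnWith_sq_polyEval hunit hγ0 hγ23) (fun t _ => sq_nonneg _) hα hlen
  rw [← hσ_eq, Real.coe_toNNReal _ (by positivity)] at key
  exact abs_le_sqrt_mul_rpow_of_sq_sq_le (by positivity) hσ (key.trans_eq (by ring))
end

section
/- If ‖(A+BK)^i‖ ≤ κ²(1-γ)^i for all i ≥ 0, ‖K‖ ≤ κ, and ‖w_s‖ ≤ W for all s, then the truncation error of the open-loop controller satisfies ‖K Σ_{i=1}^t (A+BK)^{i-1} w_{t-i} − K Σ_{i=1}^m (A+BK)^{i-1} w_{t-i}‖ ≤ (κ³W/γ)(1-γ)^m for all t > m. -/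
/-!
Shifting the index by one turns the difference of the two sums into the tail
`∑_{m ≤ i < t} L^i w_{t-1-i}` with `L = A + BK`. Each term has norm at most `κ² W (1-γ)^i`,
so the geometric tail bound gives `κ² W (1-γ)^m / γ`, and applying `K` costs one more factor `κ`.
-/

open Finset

theorem Finset.sum_Icc_one_comp_sub_one {M : Type*} [AddCommMonoid M] (f : ℕ → M) (n : ℕ) :
    ∑ i ∈ Icc 1 n, f (i - 1) = ∑ i ∈ range n, f i := by
  induction n with
  | zero => simp
  | succ n ih => rw [sum_Icc_succ_top (by omega), ih, sum_range_succ, Nat.add_sub_cancel]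

theorem norm_sum_Ico_le_of_norm_le_geometric {E : Type*} [SeminormedAddCommGroup E]
    {f : ℕ → E} {M r : ℝ} (hr0 : 0 ≤ r) (hr1 : r < 1) (hf : ∀ i, ‖f i‖ ≤ M * r ^ i)
    (m t : ℕ) : ‖∑ i ∈ Ico m t, f i‖ ≤ M * (r ^ m / (1 - r)) := by
  have hM : 0 ≤ M := by simpa using (norm_nonneg _).trans (hf 0)
  calc ‖∑ i ∈ Ico m t, f i‖ ≤ ∑ i ∈ Ico m t, M * r ^ i :=
        norm_sum_le_of_le _ fun i _ ↦ hf i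
    _ = M * ∑ i ∈ Ico m t, r ^ i := (mul_sum _ _ _).symm
    _ ≤ M * (r ^ m / (1 - r)) := by gcongr; exact geom_sum_Ico_le_of_lt_one hr0 hr1

theorem oloc_truncation_error_general (d n : ℕ)
    (A : EuclideanSpace ℝ (Fin d) →L[ℝ] EuclideanSpace ℝ (Fin d))
    (B : EuclideanSpace ℝ (Fin n) →L[ℝ] EuclideanSpace ℝ (Fin d))
    (K : EuclideanSpace ℝ (Fin d) →L[ℝ] EuclideanSpace ℝ (Fin n))
    (κ γ W : ℝ) (hγ0 : 0 < γ) (hγ1 : γ < 1)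
    (hpow : ∀ i : ℕ, ‖(A + B.comp K) ^ i‖ ≤ κ ^ 2 * (1 - γ) ^ i)
    (hK : ‖K‖ ≤ κ)
    (w : ℕ → EuclideanSpace ℝ (Fin d)) (hw : ∀ s, ‖w s‖ ≤ W)
    (m t : ℕ) (hmt : m < t) :
    ‖K (∑ i ∈ Finset.Icc 1 t, ((A + B.comp K) ^ (i - 1)) (w (t - i))) -
      K (∑ i ∈ Finset.Icc 1 m, ((A + B.comp K) ^ (i - 1)) (w (t - i)))‖ ≤
      κ ^ 3 * W / γ * (1 - γ) ^ m := by
  set L := A + B.comp K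
  let v : ℕ → EuclideanSpace ℝ (Fin d) := fun i ↦ (L ^ i) (w (t - 1 - i))
  have hv : ∀ i, ‖v i‖ ≤ κ ^ 2 * W * (1 - γ) ^ i := fun i ↦
    ((L ^ i).le_of_opNorm_le_of_le (hpow i) (hw (t - 1 - i))).trans_eq (by ring)
  have hshift : ∀ s, ∑ i ∈ Icc 1 s, (L ^ (i - 1)) (w (t - i)) = ∑ i ∈ range s, v i := fun s ↦ by
    rw [← sum_Icc_one_comp_sub_one]
    refine sum_congr rfl fun i hi ↦ ?_
    have := (mem_Icc.1 hi).1
    simp only [v]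
    congr 2
    omega
  rw [← map_sub, hshift, hshift, ← sum_Ico_eq_sub _ hmt.le]
  calc ‖K (∑ i ∈ Ico m t, v i)‖ ≤ κ * (κ ^ 2 * W * ((1 - γ) ^ m / (1 - (1 - γ)))) :=
        K.le_of_opNorm_le_of_le hK
          (norm_sum_Ico_le_of_norm_le_geometric (by linarith) (by linarith) hv m t)
    _ = κ ^ 3 * W / γ * (1 - γ) ^ m := by rw [sub_sub_cancel]; ring

/-- If `‖(A+BK)^i‖ ≤ κ²(1-γ)^i` for all `i ≥ 0`, `‖K‖ ≤ κ`, and `‖w_s‖ ≤ W` for all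
`s`, then the truncation error of the open-loop controller satisfies
`‖K Σ_{i=1}^t (A+BK)^{i-1} w_{t-i} − K Σ_{i=1}^m (A+BK)^{i-1} w_{t-i}‖ ≤ (κ³W/γ)(1-γ)^m`
for all `t > m`. -/
theorem oloc_truncation_error (d n : ℕ)
    (A : EuclideanSpace ℝ (Fin d) →L[ℝ] EuclideanSpace ℝ (Fin d))
    (B : EuclideanSpace ℝ (Fin n) →L[ℝ] EuclideanSpace ℝ (Fin d))
    (K : EuclideanSpace ℝ (Fin d) →L[ℝ] EuclideanSpace ℝ (Fin n))
    (κ γ W : ℝ) (hκ : 1 ≤ κ) (hW : 1 ≤ W) (hγ0 : 0 < γ) (hγ1 : γ < 1)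
    (hpow : ∀ i : ℕ, ‖(A + B.comp K) ^ i‖ ≤ κ ^ 2 * (1 - γ) ^ i)
    (hK : ‖K‖ ≤ κ)
    (w : ℕ → EuclideanSpace ℝ (Fin d)) (hw : ∀ s, ‖w s‖ ≤ W)
    (m t : ℕ) (hmt : m < t) :
    ‖K (∑ i ∈ Finset.Icc 1 t, ((A + B.comp K) ^ (i - 1)) (w (t - i))) -
      K (∑ i ∈ Finset.Icc 1 m, ((A + B.comp K) ^ (i - 1)) (w (t - i)))‖ ≤
      κ ^ 3 * W / γ * (1 - γ) ^ m :=
  oloc_truncation_error_general d n A B K κ γ W hγ0 hγ1 hpow hK w hw m t hmt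
end

section
/- If x_t(M) and x_t(M') are the states generated by a linear system with two spectral parameter sets, then ‖x_t(M) − x_t(M')‖ ≤ (κ²κ_B/γ)·W√m·max_j |σ_j|^{1/4}·Σ_{j=1}^h ‖M_j − M'_j‖, given ‖A^i‖ ≤ κ²(1-γ)^i, ‖B‖ ≤ κ_B, ‖w_s‖ ≤ W, and each filter φ_j a unit vector. -/
/-! The disturbance terms cancel in `x_t(M) - x_t(M')`, which is therefore the response of the
stable system to the input `B Σ_j σ_j^{1/4} (M_j - M'_j) W̃ φ_j`. That input has norm at most
`κ_B · S · W√m · Σ_j ‖M_j - M'_j‖`, and the geometric decay `‖A^i‖ ≤ κ²(1-γ)^i` sums to the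
factor `κ²/γ`. -/

open Finset

theorem geom_sum_Icc_one_pow_sub_one_le_inv {r : ℝ} (hr0 : 0 ≤ r) (hr1 : r < 1) (t : ℕ) :
    ∑ i ∈ Icc 1 t, r ^ (i - 1) ≤ (1 - r)⁻¹ := by
  rw [← Ico_add_one_right_eq_Icc, ← sum_Ico_add' _ 0 t 1]
  simpa using geom_sum_Ico_le_of_lt_one (m := 0) (n := t) hr0 hr1

section

variable {ι E F : Type*} [NormedAddCommGroup E] [NormedSpace ℝ E]
  [NormedAddCommGroup F] [NormedSpace ℝ F]

theorem norm_sum_smul_apply_le [Fintype ι] {c : ι → ℝ} {L : ι → E →L[ℝ] F} {v : ι → E}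
    {S R : ℝ} (hc : ∀ j, |c j| ≤ S) (hv : ∀ j, ‖v j‖ ≤ R) :
    ‖∑ j, c j • L j (v j)‖ ≤ S * R * ∑ j, ‖L j‖ := by
  rw [mul_sum]
  refine (norm_sum_le _ _).trans (sum_le_sum fun j _ => ?_)
  rw [norm_smul, Real.norm_eq_abs, mul_right_comm]
  have hS : 0 ≤ S := (abs_nonneg _).trans (hc j)
  calc |c j| * ‖L j (v j)‖ ≤ S * (‖L j‖ * R) :=
        mul_le_mul (hc j) ((L j).le_of_opNorm_le_of_le le_rfl (hv j)) (norm_nonneg _) hS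
    _ = S * ‖L j‖ * R := by ring

theorem norm_sum_Icc_pow_apply_le {A : E →L[ℝ] E} {c r K : ℝ} (hr0 : 0 ≤ r) (hr1 : r < 1)
    (hA : ∀ i, ‖A ^ i‖ ≤ c * r ^ i) {u : ℕ → E} (hu : ∀ i, ‖u i‖ ≤ K) (t : ℕ) :
    ‖∑ i ∈ Icc 1 t, (A ^ (i - 1)) (u i)‖ ≤ c * K / (1 - r) := by
  have hcK : 0 ≤ c * K :=
    mul_nonneg (by simpa using (norm_nonneg _).trans (hA 0)) ((norm_nonneg _).trans (hu 0))
  calc ‖∑ i ∈ Icc 1 t, (A ^ (i - 1)) (u i)‖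
      ≤ ∑ i ∈ Icc 1 t, c * K * r ^ (i - 1) := by
        refine (norm_sum_le _ _).trans (sum_le_sum fun i _ => ?_)
        calc ‖(A ^ (i - 1)) (u i)‖ ≤ c * r ^ (i - 1) * K :=
              (A ^ (i - 1)).le_of_opNorm_le_of_le (hA _) (hu i)
          _ = c * K * r ^ (i - 1) := by ring
    _ ≤ c * K * (1 - r)⁻¹ := by
        rw [← mul_sum]
        exact mul_le_mul_of_nonneg_left (geom_sum_Icc_one_pow_sub_one_le_inv hr0 hr1 t) hcK
    _ = c * K / (1 - r) := rfl

end

theorem spectral_state_diff_bound_general (d n m h : ℕ) (κ κB γ W S : ℝ)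
    (hγ0 : 0 < γ) (hγ1 : γ < 1)
    (A : EuclideanSpace ℝ (Fin d) →L[ℝ] EuclideanSpace ℝ (Fin d))
    (B : EuclideanSpace ℝ (Fin n) →L[ℝ] EuclideanSpace ℝ (Fin d))
    (hA : ∀ i : ℕ, ‖A ^ i‖ ≤ κ ^ 2 * (1 - γ) ^ i) (hB : ‖B‖ ≤ κB)
    (w : ℕ → EuclideanSpace ℝ (Fin d))
    (Wt : ℕ → (EuclideanSpace ℝ (Fin m) →L[ℝ] EuclideanSpace ℝ (Fin d)))
    (hWt : ∀ s, ‖Wt s‖ ≤ W * Real.sqrt m)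
    (φ : Fin h → EuclideanSpace ℝ (Fin m)) (hφ : ∀ j, ‖φ j‖ = 1)
    (σ : Fin h → ℝ) (hσ : ∀ j, 0 ≤ σ j)
    (hS : ∀ j, (σ j) ^ ((1:ℝ)/4) ≤ S)
    (M M' : Fin h → (EuclideanSpace ℝ (Fin d) →L[ℝ] EuclideanSpace ℝ (Fin n)))
    (x : (Fin h → (EuclideanSpace ℝ (Fin d) →L[ℝ] EuclideanSpace ℝ (Fin n))) → ℕ →
        EuclideanSpace ℝ (Fin d))
    (hx : ∀ N t, x N t =
      (∑ i ∈ Finset.Icc 1 t, (A ^ (i - 1)) (w (t - i))) +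
      ∑ i ∈ Finset.Icc 1 t, (A ^ (i - 1))
        (B (∑ j : Fin h, (σ j) ^ ((1:ℝ)/4) • (N j) ((Wt (t - i)) (φ j)))))
    (t : ℕ) :
    ‖x M t - x M' t‖ ≤
      κ ^ 2 * κB / γ * (W * Real.sqrt m) * S * ∑ j : Fin h, ‖M j - M' j‖ := by
  have hdiff : x M t - x M' t = ∑ i ∈ Icc 1 t, (A ^ (i - 1))
      (B (∑ j, σ j ^ ((1:ℝ)/4) • (M j - M' j) (Wt (t - i) (φ j)))) := by
    simp only [hx, add_sub_add_left_eq_sub, ← sum_sub_distrib, ← map_sub, ← smul_sub,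
      sub_apply]
  have hfilter : ∀ s j, ‖Wt s (φ j)‖ ≤ W * Real.sqrt m := fun s j => by
    simpa using (Wt s).le_of_opNorm_le_of_le (hWt s) (hφ j).le
  have hweight : ∀ j, |σ j ^ ((1:ℝ)/4)| ≤ S := fun j => by
    rw [abs_of_nonneg (Real.rpow_nonneg (hσ j) _)]
    exact hS j
  have hinput : ∀ i, ‖B (∑ j, σ j ^ ((1:ℝ)/4) • (M j - M' j) (Wt (t - i) (φ j)))‖ ≤
      κB * (S * (W * Real.sqrt m) * ∑ j, ‖M j - M' j‖) := fun i =>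
    B.le_of_opNorm_le_of_le hB (norm_sum_smul_apply_le hweight (hfilter (t - i)))
  rw [hdiff]
  calc _ ≤ κ ^ 2 * (κB * (S * (W * Real.sqrt m) * ∑ j, ‖M j - M' j‖)) / (1 - (1 - γ)) :=
        norm_sum_Icc_pow_apply_le (by linarith) (by linarith) hA hinput t
    _ = _ := by rw [sub_sub_cancel]; ring

/-- If `x_t(M)` and `x_t(M')` are the states generated by the linear system with two
spectral parameter sets `M, M'`, then
`‖x_t(M) − x_t(M')‖ ≤ (κ²κ_B/γ)·W√m·max_j σ_j^{1/4}·Σ_{j=1}^h ‖M_j − M'_j‖`,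
given `‖A^i‖ ≤ κ²(1-γ)^i`, `‖B‖ ≤ κ_B`, `‖W̃_s‖ ≤ W√m`, each filter `φ_j` a unit
vector, and `S` any bound on `max_j σ_j^{1/4}`. -/
theorem spectral_state_diff_bound (d n m h : ℕ) (κ κB γ W S : ℝ)
    (hκ : 1 ≤ κ) (hκB : 0 ≤ κB) (hγ0 : 0 < γ) (hγ1 : γ < 1) (hW : 0 ≤ W)
    (A : EuclideanSpace ℝ (Fin d) →L[ℝ] EuclideanSpace ℝ (Fin d))
    (B : EuclideanSpace ℝ (Fin n) →L[ℝ] EuclideanSpace ℝ (Fin d))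
    (hA : ∀ i : ℕ, ‖A ^ i‖ ≤ κ ^ 2 * (1 - γ) ^ i) (hB : ‖B‖ ≤ κB)
    (w : ℕ → EuclideanSpace ℝ (Fin d)) (hw : ∀ s, ‖w s‖ ≤ W)
    (Wt : ℕ → (EuclideanSpace ℝ (Fin m) →L[ℝ] EuclideanSpace ℝ (Fin d)))
    (hWt : ∀ s, ‖Wt s‖ ≤ W * Real.sqrt m)
    (φ : Fin h → EuclideanSpace ℝ (Fin m)) (hφ : ∀ j, ‖φ j‖ = 1)
    (σ : Fin h → ℝ) (hσ : ∀ j, 0 ≤ σ j)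
    (hS : ∀ j, (σ j) ^ ((1:ℝ)/4) ≤ S)
    (M M' : Fin h → (EuclideanSpace ℝ (Fin d) →L[ℝ] EuclideanSpace ℝ (Fin n)))
    (x : (Fin h → (EuclideanSpace ℝ (Fin d) →L[ℝ] EuclideanSpace ℝ (Fin n))) → ℕ →
        EuclideanSpace ℝ (Fin d))
    (hx : ∀ N t, x N t =
      (∑ i ∈ Finset.Icc 1 t, (A ^ (i - 1)) (w (t - i))) +
      ∑ i ∈ Finset.Icc 1 t, (A ^ (i - 1))
        (B (∑ j : Fin h, (σ j) ^ ((1:ℝ)/4) • (N j) ((Wt (t - i)) (φ j)))))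
    (t : ℕ) :
    ‖x M t - x M' t‖ ≤
      κ ^ 2 * κB / γ * (W * Real.sqrt m) * S * ∑ j : Fin h, ‖M j - M' j‖ :=
  spectral_state_diff_bound_general d n m h κ κB γ W S hγ0 hγ1 A B hA hB w Wt hWt φ hφ σ hσ hS M M'
    x hx t
end
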